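/- arXiv:1706.04331 — 2 statements merged into one kernel-verified Lean document; each statement's English description precedes it below -/
import Mathlib

section
/- Let $F\in\mathbb{Z}[x,y]$ be an irreducible binary form of degree $d$ with $b=F(1,0)\neq 0$, let $\theta$ be a root of $\tilde F(x,1)$ where $\tilde F(x,y)=b^{d-1}F(b^{-1}x,y)$, $K=\mathbb{Q}(\theta)$, and $\Delta_\theta$ the discriminant of the order $\mathbb{Z}[\theta]$. Let $(s,t)\in\mathbb{Z}^2$ with $\gcd(s,t)=1$ and $F(s,t)\neq 0$. Then every integral ideal $\mathfrak{a}$ of $\mathfrak{o}_K$ dividing $(bs-\theta t)$ with $\gcd(\mathrm{N}_K\mathfrak{a},2b\Delta_\theta)=1$ is divisible only by prime ideals of residue degree 1, and no two distinct prime ideals of equal norm divide $\mathfrak{a}$. -/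
/-!
Let `𝔭` be a prime dividing `𝔞`, with residue characteristic `p`. The norm condition puts `b`, `Δ`
and `t` outside `𝔭` (for `t` because `bs - θt ∈ 𝔭` and `gcd(s, t) = 1`), so `θ ≡ c (mod 𝔭)` for
any integer `c` with `tc ≡ bs (mod p)`. Since `Δ·𝓞_K ⊆ ℤ[θ]` and `Δ` is invertible mod `p`,
every element of `𝓞_K` is congruent to an integer modulo `𝔭`; hence `𝓞_K/𝔭 = 𝔽_p` and `N𝔭 = p`.
Two such primes of equal norm `p` therefore contain the same `θ - c` and the same integers, so they
agree on `ℤ[θ]`, and since `Δ` lies in neither of them, they agree on `𝓞_K`.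
-/

open NumberField Polynomial

section IntegralGenerator

variable {S : Type*} [CommRing S]

theorem Ideal.Quotient.mk_aeval_eq_intCast {P : Ideal S} {θ : S} {c : ℤ} (h : θ - c ∈ P)
    (g : ℤ[X]) : Ideal.Quotient.mk P (aeval θ g) = ((g.eval c : ℤ) : S ⧸ P) := by
  have hθ : Ideal.Quotient.mkₐ ℤ P θ = c := by
    rw [Ideal.Quotient.mkₐ_eq_mk, ← map_intCast (Ideal.Quotient.mk P), Ideal.Quotient.eq]
    exact h
  rw [← Ideal.Quotient.mkₐ_eq_mk ℤ, ← aeval_algHom_apply, hθ, aeval_def, eval₂_at_intCast]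
  rfl

theorem exists_sub_intCast_mem_of_mem_adjoin {θ y : S} (hy : y ∈ Algebra.adjoin ℤ {θ})
    (c : ℤ) : ∃ m : ℤ, ∀ P : Ideal S, θ - c ∈ P → y - m ∈ P := by
  rw [Algebra.adjoin_singleton_eq_range_aeval] at hy
  obtain ⟨g, rfl⟩ := hy
  refine ⟨g.eval c, fun P h => ?_⟩
  rw [← Ideal.Quotient.eq, map_intCast, ← Ideal.Quotient.mk_aeval_eq_intCast h g]
  rfl

theorem Ideal.intCast_notMem_of_isCoprime {P : Ideal S} (hP : P ≠ ⊤) {m n : ℤ}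
    (hm : (m : S) ∈ P) (hmn : IsCoprime m n) : (n : S) ∉ P := by
  obtain ⟨u, v, huv⟩ := hmn
  intro hn
  apply hP
  rw [Ideal.eq_top_iff_one, ← Int.cast_one, ← huv]
  push_cast
  exact P.add_mem (P.mul_mem_left _ hm) (P.mul_mem_left _ hn)

theorem Ideal.Quotient.intCast_surjective_of_sub_mem {θ : S} {Δ : ℤ}
    (hΔ : ∀ x : S, (Δ : S) * x ∈ Algebra.adjoin ℤ {θ}) {P : Ideal S} {q c : ℤ} (hq : (q : S) ∈ P)
    (hΔq : IsCoprime Δ q) (hθ : θ - c ∈ P) : Function.Surjective (Int.cast : ℤ → S ⧸ P) := by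
  intro z
  obtain ⟨x, rfl⟩ := Ideal.Quotient.mk_surjective z
  obtain ⟨m, hm⟩ := exists_sub_intCast_mem_of_mem_adjoin (hΔ x) c
  obtain ⟨u, v, huv⟩ := hΔq
  refine ⟨u * m, ?_⟩
  rw [← map_intCast (Ideal.Quotient.mk P), Ideal.Quotient.eq]
  have hx : ((u * m : ℤ) : S) - x = -(u : S) * ((Δ : S) * x - m) - (v : S) * (q * x) := by
    have huv' := congrArg (Int.cast : ℤ → S) huv
    push_cast at huv' ⊢
    linear_combination x * huv'
  rw [hx]
  exact P.sub_mem (P.mul_mem_left _ (hm P hθ)) (P.mul_mem_left _ (P.mul_mem_right _ hq))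

theorem Ideal.eq_of_sub_intCast_mem {θ : S} {Δ : ℤ}
    (hΔ : ∀ x : S, (Δ : S) * x ∈ Algebra.adjoin ℤ {θ}) {P₁ P₂ : Ideal S} [P₁.IsPrime] [P₂.IsPrime]
    {c : ℤ}    (hΔ₁ : (Δ : S) ∉ P₁) (hΔ₂ : (Δ : S) ∉ P₂) (hθ₁ : θ - c ∈ P₁) (hθ₂ : θ - c ∈ P₂)
    (hint : ∀ n : ℤ, (n : S) ∈ P₁ ↔ (n : S) ∈ P₂) : P₁ = P₂ := by
  ext x
  obtain ⟨m, hm⟩ := exists_sub_intCast_mem_of_mem_adjoin (hΔ x) c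
  have hmem_iff {P : Ideal S} (hP : θ - c ∈ P) : (Δ : S) * x ∈ P ↔ (m : S) ∈ P := by
    rw [← sub_add_cancel ((Δ : S) * x) m, P.add_mem_iff_right (hm P hP)]
  rw [← Ideal.IsPrime.mul_mem_left_iff hΔ₁, ← Ideal.IsPrime.mul_mem_left_iff hΔ₂,
    hmem_iff hθ₁, hmem_iff hθ₂, hint]

theorem Ideal.sub_intCast_mem_of_mul_sub_mem {P : Ideal S} [P.IsPrime] {θ : S} {b s t c : ℤ}
    (ht : (t : S) ∉ P) (hc : ((t * c - b * s : ℤ) : S) ∈ P) (h : (b : S) * s - θ * t ∈ P) :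
    θ - c ∈ P := by
  rw [← Ideal.IsPrime.mul_mem_left_iff ht]
  have : (t : S) * (θ - c) = -((b : S) * s - θ * t) - ((t * c - b * s : ℤ) : S) := by
    push_cast; ring
  rw [this]
  exact P.sub_mem (P.neg_mem h) hc

theorem Ideal.intCast_mem_iff_ringChar_dvd (P : Ideal S) (n : ℤ) :
    (n : S) ∈ P ↔ (ringChar (S ⧸ P) : ℤ) ∣ n := by
  rw [← Ideal.Quotient.eq_zero_iff_mem, map_intCast, CharP.intCast_eq_zero_iff _ (ringChar _)]

end IntegralGenerator

theorem Nat.card_eq_ringChar_of_intCast_surjective {R : Type*} [CommRing R]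
    (h : Function.Surjective (Int.cast : ℤ → R)) : Nat.card R = ringChar R := by
  have hbij : Function.Bijective (ZMod.castHom (dvd_refl (ringChar R)) R) := by
    refine ⟨ZMod.castHom_injective R, fun x => ?_⟩
    obtain ⟨n, rfl⟩ := h x
    exact ⟨n, map_intCast _ n⟩
  rw [← Nat.card_congr (Equiv.ofBijective _ hbij), Nat.card_zmod]

theorem NumberField.RingOfIntegers.discr_pow_mul_mem_adjoin {K : Type*} [Field K] [NumberField K]
    {θ : 𝓞 K} (hgen : Algebra.adjoin ℚ {(θ : K)} = ⊤) {d : ℕ} (hd : Module.finrank ℚ K = d)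
    (x : 𝓞 K) :
    (Algebra.discr ℤ (fun i : Fin d => θ ^ (i : ℕ)) : 𝓞 K) * x ∈ Algebra.adjoin ℤ {θ} := by
  let B : PowerBasis ℚ K := .ofAdjoinEqTop' (IsIntegral.of_finite ℚ (θ : K)) hgen
  have hgen : B.gen = θ := PowerBasis.ofAdjoinEqTop'_gen _ _
  obtain rfl : B.dim = d := by rw [← B.finrank, hd]
  have hdiscr : Algebra.discr ℚ B.basis = Algebra.discr ℤ (fun i : Fin B.dim => θ ^ (i : ℕ)) := by
    rw [B.coe_basis, hgen, Algebra.discr_def, Algebra.discr_def, Int.cast_det]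
    congr 1
    ext i j
    simp [Algebra.traceMatrix_apply, Algebra.traceForm_apply, Algebra.coe_trace_int]
  have hmem := Algebra.discr_mul_isIntegral_mem_adjoin ℚ (B := B)
    (hgen.symm ▸ RingOfIntegers.isIntegral_coe θ) (RingOfIntegers.isIntegral_coe x)
  have hmap : Algebra.adjoin ℤ {(θ : K)} =
      (Algebra.adjoin ℤ {θ}).map (IsScalarTower.toAlgHom ℤ (𝓞 K) K) :=
    ((IsScalarTower.toAlgHom ℤ (𝓞 K) K).map_adjoin_singleton θ).symm
  rw [hdiscr, hgen, hmap] at hmem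
  obtain ⟨y, hy, hyx⟩ := hmem
  have hyx : y = (Algebra.discr ℤ (fun i : Fin B.dim => θ ^ (i : ℕ)) : 𝓞 K) * x :=
    RingOfIntegers.coe_injective (by simpa [Algebra.smul_def] using hyx)
  exact hyx ▸ hy

section LinearFormIdeal

variable {S : Type*} [CommRing S] {P : Ideal S} {θ : S} {b s t : ℤ}

theorem Ideal.intCast_notMem_of_linearForm_mem [P.IsPrime] (hst : IsCoprime s t)
    (hb : (b : S) ∉ P) (h : (b : S) * s - θ * t ∈ P) : (t : S) ∉ P := by
  intro ht
  have hbs : (b : S) * s ∈ P := by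
    simpa using P.add_mem h (P.mul_mem_left θ ht)
  obtain hb' | hs := Ideal.IsPrime.mem_or_mem ‹_› hbs
  · exact hb hb'
  · exact Ideal.intCast_notMem_of_isCoprime Ideal.IsPrime.ne_top' hs hst ht

theorem Ideal.sub_intCast_mem_of_ringChar_dvd [P.IsPrime] (hst : IsCoprime s t)
    (hb : (b : S) ∉ P) (h : (b : S) * s - θ * t ∈ P) {c : ℤ}
    (hc : (ringChar (S ⧸ P) : ℤ) ∣ t * c - b * s) : θ - c ∈ P :=
  Ideal.sub_intCast_mem_of_mul_sub_mem (Ideal.intCast_notMem_of_linearForm_mem hst hb h)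
    ((P.intCast_mem_iff_ringChar_dvd _).mpr hc) h

theorem Ideal.exists_ringChar_dvd_mul_sub (hp : (ringChar (S ⧸ P)).Prime) (ht : (t : S) ∉ P) :
    ∃ c : ℤ, (ringChar (S ⧸ P) : ℤ) ∣ t * c - b * s := by
  rw [P.intCast_mem_iff_ringChar_dvd] at ht
  obtain ⟨u, v, huv⟩ := ((Nat.prime_iff_prime_int.mp hp).coprime_iff_not_dvd.mpr ht).symm
  exact ⟨u * b * s, -(v * b * s), by linear_combination b * s * huv⟩

end LinearFormIdeal

section AbsNorm

variable {S : Type*} [CommRing S] [IsDedekindDomain S] [Module.Free ℤ S] {P : Ideal S}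

theorem Ideal.absNorm_ne_zero_of_isCoprime_of_even {n : ℤ}
    (h : IsCoprime (Ideal.absNorm P : ℤ) n) (hn : Even n) : Ideal.absNorm P ≠ 0 := by
  intro h0
  rw [h0, Nat.cast_zero, isCoprime_zero_left] at h
  rcases Int.isUnit_iff.mp h with rfl | rfl <;> simp at hn

theorem Ideal.intCast_notMem_of_isCoprime_absNorm (hP : P ≠ ⊤) {n : ℤ}
    (h : IsCoprime (Ideal.absNorm P : ℤ) n) : (n : S) ∉ P :=
  Ideal.intCast_notMem_of_isCoprime hP (by exact_mod_cast P.absNorm_mem) h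

theorem Ideal.ringChar_quotient_prime [P.IsPrime] (h : Ideal.absNorm P ≠ 0) :
    (ringChar (S ⧸ P)).Prime :=
  have := (Ideal.absNorm_ne_zero_iff P).mp h
  CharP.prime_ringChar _

theorem Ideal.absNorm_eq_ringChar_of_sub_mem {θ : S} {Δ c : ℤ}
    (hΔ : ∀ x : S, (Δ : S) * x ∈ Algebra.adjoin ℤ {θ}) (hcop : IsCoprime (Ideal.absNorm P : ℤ) Δ)
    (hθ : θ - c ∈ P) : Ideal.absNorm P = ringChar (S ⧸ P) := by
  rw [Ideal.absNorm_apply, Submodule.cardQuot_apply]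
  exact Nat.card_eq_ringChar_of_intCast_surjective
    (Ideal.Quotient.intCast_surjective_of_sub_mem hΔ (by exact_mod_cast P.absNorm_mem) hcop.symm hθ)

end AbsNorm

section LinearFormAbsNorm

variable {S : Type*} [CommRing S] [IsDedekindDomain S] [Module.Free ℤ S] {P : Ideal S} {θ : S}
  {b Δ s t : ℤ}

theorem Ideal.absNorm_eq_ringChar_of_linearForm_mem
    (hΔ : ∀ x : S, (Δ : S) * x ∈ Algebra.adjoin ℤ {θ}) (hst : IsCoprime s t) [P.IsPrime]
    (hcop : IsCoprime (Ideal.absNorm P : ℤ) (2 * b * Δ)) (h : (b : S) * s - θ * t ∈ P) :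
    Ideal.absNorm P = ringChar (S ⧸ P) := by
  have hp := Ideal.ringChar_quotient_prime
    (Ideal.absNorm_ne_zero_of_isCoprime_of_even hcop (by simp [mul_assoc]))
  have hb : (b : S) ∉ P := Ideal.intCast_notMem_of_isCoprime_absNorm Ideal.IsPrime.ne_top'
    hcop.of_mul_right_left.of_mul_right_right
  obtain ⟨c, hc⟩ :=
    Ideal.exists_ringChar_dvd_mul_sub hp (Ideal.intCast_notMem_of_linearForm_mem hst hb h)
  exact Ideal.absNorm_eq_ringChar_of_sub_mem hΔ hcop.of_mul_right_right
    (Ideal.sub_intCast_mem_of_ringChar_dvd hst hb h hc)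

theorem Ideal.absNorm_prime_of_linearForm_mem
    (hΔ : ∀ x : S, (Δ : S) * x ∈ Algebra.adjoin ℤ {θ}) (hst : IsCoprime s t) [P.IsPrime]
    (hcop : IsCoprime (Ideal.absNorm P : ℤ) (2 * b * Δ)) (h : (b : S) * s - θ * t ∈ P) :
    (Ideal.absNorm P).Prime := by
  rw [Ideal.absNorm_eq_ringChar_of_linearForm_mem hΔ hst hcop h]
  exact Ideal.ringChar_quotient_prime
    (Ideal.absNorm_ne_zero_of_isCoprime_of_even hcop (by simp [mul_assoc]))

theorem Ideal.eq_of_linearForm_mem_of_absNorm_eq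
    (hΔ : ∀ x : S, (Δ : S) * x ∈ Algebra.adjoin ℤ {θ}) (hst : IsCoprime s t)
    {P₁ P₂ : Ideal S} [P₁.IsPrime] [P₂.IsPrime]
    (hcop₁ : IsCoprime (Ideal.absNorm P₁ : ℤ) (2 * b * Δ)) (h₁ : (b : S) * s - θ * t ∈ P₁)
    (hcop₂ : IsCoprime (Ideal.absNorm P₂ : ℤ) (2 * b * Δ)) (h₂ : (b : S) * s - θ * t ∈ P₂)
    (hN : Ideal.absNorm P₁ = Ideal.absNorm P₂) : P₁ = P₂ := by
  have hchar : ringChar (S ⧸ P₁) = ringChar (S ⧸ P₂) := by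
    rw [← Ideal.absNorm_eq_ringChar_of_linearForm_mem hΔ hst hcop₁ h₁,
      ← Ideal.absNorm_eq_ringChar_of_linearForm_mem hΔ hst hcop₂ h₂, hN]
  have hp := Ideal.ringChar_quotient_prime
    (Ideal.absNorm_ne_zero_of_isCoprime_of_even hcop₁ (by simp [mul_assoc]))
  have hb₁ : (b : S) ∉ P₁ := Ideal.intCast_notMem_of_isCoprime_absNorm Ideal.IsPrime.ne_top'
    hcop₁.of_mul_right_left.of_mul_right_right
  have hb₂ : (b : S) ∉ P₂ := Ideal.intCast_notMem_of_isCoprime_absNorm Ideal.IsPrime.ne_top'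
    hcop₂.of_mul_right_left.of_mul_right_right
  obtain ⟨c, hc⟩ :=
    Ideal.exists_ringChar_dvd_mul_sub hp (Ideal.intCast_notMem_of_linearForm_mem hst hb₁ h₁)
  refine Ideal.eq_of_sub_intCast_mem hΔ
    (Ideal.intCast_notMem_of_isCoprime_absNorm Ideal.IsPrime.ne_top' hcop₁.of_mul_right_right)
    (Ideal.intCast_notMem_of_isCoprime_absNorm Ideal.IsPrime.ne_top' hcop₂.of_mul_right_right)
    (Ideal.sub_intCast_mem_of_ringChar_dvd hst hb₁ h₁ hc)
    (Ideal.sub_intCast_mem_of_ringChar_dvd hst hb₂ h₂ (hchar ▸ hc)) fun n => ?_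
  rw [Ideal.intCast_mem_iff_ringChar_dvd, Ideal.intCast_mem_iff_ringChar_dvd, hchar]

end LinearFormAbsNorm

theorem stmt_7_general {K : Type*} [Field K] [NumberField K]
    (d : ℕ)
    (b : ℤ)
    (θ : 𝓞 K)
    (hdeg : Module.finrank ℚ K = d)
    (hgen : Algebra.adjoin ℚ {(θ : K)} = ⊤)
    (Δ : ℤ) (hΔ : Δ = Algebra.discr ℤ (fun i : Fin d => θ ^ (i : ℕ)))
    (s t : ℤ) (hst : IsCoprime s t)
    (𝔞 : Ideal (𝓞 K))
    (hdvd : 𝔞 ∣ Ideal.span {(b : 𝓞 K) * (s : 𝓞 K) - θ * (t : 𝓞 K)})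
    (hcop : IsCoprime (Ideal.absNorm 𝔞 : ℤ) (2 * b * Δ)) :
    (∀ 𝔭 : Ideal (𝓞 K), Prime 𝔭 → 𝔭 ∣ 𝔞 → (Ideal.absNorm 𝔭).Prime) ∧
    (∀ 𝔭₁ 𝔭₂ : Ideal (𝓞 K), Prime 𝔭₁ → Prime 𝔭₂ → 𝔭₁ ∣ 𝔞 → 𝔭₂ ∣ 𝔞 →
      Ideal.absNorm 𝔭₁ = Ideal.absNorm 𝔭₂ → 𝔭₁ = 𝔭₂) := by
  have hΔθ : ∀ x : 𝓞 K, (Δ : 𝓞 K) * x ∈ Algebra.adjoin ℤ {θ} :=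
    hΔ ▸ RingOfIntegers.discr_pow_mul_mem_adjoin hgen hdeg
  have hmem_of_dvd {𝔭 : Ideal (𝓞 K)} (h : 𝔭 ∣ 𝔞) : (b : 𝓞 K) * s - θ * t ∈ 𝔭 :=
    Ideal.le_of_dvd (h.trans hdvd) (Ideal.mem_span_singleton_self _)
  have hcop_of_dvd {𝔭 : Ideal (𝓞 K)} (h : 𝔭 ∣ 𝔞) : IsCoprime (Ideal.absNorm 𝔭 : ℤ) (2 * b * Δ) :=
    hcop.of_isCoprime_of_dvd_left (Int.natCast_dvd_natCast.mpr (map_dvd Ideal.absNorm h))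
  refine ⟨fun 𝔭 h𝔭 h => ?_, fun 𝔭₁ 𝔭₂ h𝔭₁ h𝔭₂ h₁ h₂ hN => ?_⟩
  · have := Ideal.isPrime_of_prime h𝔭
    exact Ideal.absNorm_prime_of_linearForm_mem hΔθ hst (hcop_of_dvd h) (hmem_of_dvd h)
  · have := Ideal.isPrime_of_prime h𝔭₁
    have := Ideal.isPrime_of_prime h𝔭₂
    exact Ideal.eq_of_linearForm_mem_of_absNorm_eq hΔθ hst (hcop_of_dvd h₁) (hmem_of_dvd h₁)
      (hcop_of_dvd h₂) (hmem_of_dvd h₂) hN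

/-- Lemma 2.3: if `gcd(s,t)=1`, `F(s,t) ≠ 0` and
`𝔞 ∣ (bs - θt)` with `gcd(N𝔞, 2bΔ_θ) = 1`, then every prime divisor of `𝔞` has
residue degree one, and no two distinct prime divisors of `𝔞` share the same norm. -/
theorem stmt_7 {K : Type*} [Field K] [NumberField K]
    (d : ℕ) (hd : 0 < d)
    (F Ft : MvPolynomial (Fin 2) ℤ)
    (hFhom : F.IsHomogeneous d) (hFirr : Irreducible F)
    (b : ℤ) (hb : b = MvPolynomial.eval (fun i : Fin 2 => if i = 0 then 1 else 0) F)
    (hb0 : b ≠ 0)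
    (hFt : ∀ x y : ℚ, (MvPolynomial.aeval ![x, y] Ft : ℚ) =
      (b : ℚ) ^ (d - 1) * MvPolynomial.aeval ![x / (b : ℚ), y] F)
    (θ : 𝓞 K) (hθ : (MvPolynomial.aeval ![θ, (1 : 𝓞 K)] Ft : 𝓞 K) = 0)
    (hdeg : Module.finrank ℚ K = d)
    (hgen : Algebra.adjoin ℚ {(θ : K)} = ⊤)
    (Δ : ℤ) (hΔ : Δ = Algebra.discr ℤ (fun i : Fin d => θ ^ (i : ℕ)))
    (s t : ℤ) (hst : IsCoprime s t)
    (hF0 : MvPolynomial.eval (fun i : Fin 2 => if i = 0 then s else t) F ≠ 0)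
    (𝔞 : Ideal (𝓞 K))
    (hdvd : 𝔞 ∣ Ideal.span {(b : 𝓞 K) * (s : 𝓞 K) - θ * (t : 𝓞 K)})
    (hcop : IsCoprime (Ideal.absNorm 𝔞 : ℤ) (2 * b * Δ)) :
    (∀ 𝔭 : Ideal (𝓞 K), Prime 𝔭 → 𝔭 ∣ 𝔞 → (Ideal.absNorm 𝔭).Prime) ∧
    (∀ 𝔭₁ 𝔭₂ : Ideal (𝓞 K), Prime 𝔭₁ → Prime 𝔭₂ → 𝔭₁ ∣ 𝔞 → 𝔭₂ ∣ 𝔞 →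
      Ideal.absNorm 𝔭₁ = Ideal.absNorm 𝔭₂ → 𝔭₁ = 𝔭₂) :=
  stmt_7_general d b θ hdeg hgen Δ hΔ s t hst 𝔞 hdvd hcop
end

section
/- Let $K$ be a number field with ring of integers $\mathfrak{o}_K$ and discriminant $D_K$, and let $\theta\in\mathfrak{o}_K$ with $K=\mathbb{Q}(\theta)$, $b\in\mathbb{Z}$. Let $\mathfrak{a}\in\mathcal{P}_K$ with $\gcd(\mathrm{N}_K\mathfrak{a},D_K)=1$. Then there exists $k\in\mathbb{Z}$ such that for all $(s,t)\in\mathbb{Z}^2$: $\mathfrak{a}\mid(bs-\theta t)$ if and only if $bs\equiv kt\ (\mathrm{mod}\ \mathrm{N}_K\mathfrak{a})$. -/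
/-!
Each prime `𝔭 ∣ 𝔞` has prime norm `p` with `p ∤ D_K`, so `𝔭` is unramified of degree one over
`p` and `𝔭 ^ e ∩ ℤ = p ^ e ℤ`; as the norms of distinct primes dividing `𝔞` are distinct primes,
`𝔞 ∩ ℤ = N𝔞 ℤ`, i.e. `𝓞_K ⧸ 𝔞` has characteristic `N𝔞`. Having exactly `N𝔞` elements, it is then
the image of `ℤ`, so `θ ≡ k (mod 𝔞)` for some `k ∈ ℤ`, and `bs - θt ≡ bs - kt (mod 𝔞)`.
-/

open NumberField Ideal UniqueFactorizationMonoid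

theorem Int.cast_surjective_of_charP {R : Type*} [Ring R] [Finite R] {n : ℕ} [CharP R n]
    (hn : Nat.card R = n) : Function.Surjective (Int.cast : ℤ → R) := by
  have := Fintype.ofFinite R
  intro r
  obtain ⟨a, rfl⟩ := (ZMod.ringEquiv R (Nat.card_eq_fintype_card.symm.trans hn)).surjective r
  obtain ⟨k, rfl⟩ := ZMod.intCast_surjective a
  exact ⟨k, (map_intCast _ k).symm⟩

theorem Ideal.pow_dvd_span_algebraMap_iff {R S : Type*} [CommRing R] [IsDomain R]
    [IsPrincipalIdealRing R] [CommRing S] [IsDedekindDomain S] [Algebra R S] [FaithfulSMul R S]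
    {p : R} (hp : Prime p) {𝔭 : Ideal S} (h𝔭 : Prime 𝔭) [𝔭.LiesOver (span {p})]
    (he : (span {p}).ramificationIdx' 𝔭 = 1) (n : ℕ) (m : R) :
    𝔭 ^ n ∣ span {algebraMap R S m} ↔ p ^ n ∣ m := by
  rcases eq_or_ne m 0 with rfl | hm
  · simp
  have hspan : span {m} ≠ ⊥ := by simpa using hm
  rw [← span_singleton_dvd_span_singleton_iff_dvd, ← span_singleton_pow,
    pow_dvd_iff_le_emultiplicity, pow_dvd_iff_le_emultiplicity, ← Set.image_singleton, ← map_span,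
    IsDedekindDomain.emultiplicity_map_eq_ramificationIdx'_mul hspan
      (prime_of_isPrime (by simpa using hp.ne_zero)
        ((span_singleton_prime hp.ne_zero).mpr hp)).irreducible h𝔭.irreducible h𝔭.ne_zero, he,
    Nat.cast_one, one_mul]

theorem NumberField.ramificationIdx'_eq_one_of_not_dvd_discr {K : Type*} [Field K] [NumberField K]
    {p : ℤ} (hp : Prime p) (hdisc : ¬ p ∣ discr K) (𝔭 : Ideal (𝓞 K)) [𝔭.IsPrime]
    [h𝔭 : 𝔭.LiesOver (span {p})] : (span {p}).ramificationIdx' 𝔭 = 1 := by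
  have := (not_dvd_discr_iff_forall_mem K (𝓞 K) hp).mp hdisc 𝔭 ‹_›
    (by simpa using (liesOver_span_iff IsPrime.ne_top' hp).mp h𝔭)
  rw [ramificationIdx'_eq_ramificationIdx _ _ (by simpa using hp.ne_zero), ramificationIdx_eq_one]

theorem NumberField.pow_dvd_span_intCast_iff {K : Type*} [Field K] [NumberField K]
    {𝔭 : Ideal (𝓞 K)} (h𝔭 : Prime 𝔭) (hN : (absNorm 𝔭).Prime)
    (hdisc : ¬ (absNorm 𝔭 : ℤ) ∣ discr K) (n : ℕ) (m : ℤ) :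
    𝔭 ^ n ∣ span {(m : 𝓞 K)} ↔ (absNorm 𝔭 : ℤ) ^ n ∣ m := by
  have hp : Prime (absNorm 𝔭 : ℤ) := Nat.prime_iff_prime_int.mp hN
  have := isPrime_of_prime h𝔭
  have : 𝔭.LiesOver (span {(absNorm 𝔭 : ℤ)}) :=
    (liesOver_span_iff IsPrime.ne_top' hp).mpr (by simpa using absNorm_mem 𝔭)
  simpa using pow_dvd_span_algebraMap_iff hp h𝔭
    (ramificationIdx'_eq_one_of_not_dvd_discr hp hdisc 𝔭) n m

theorem NumberField.absNorm_dvd_of_intCast_mem {K : Type*} [Field K] [NumberField K]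
    {𝔞 : Ideal (𝓞 K)} (h𝔞 : 𝔞 ≠ 0)
    (hP1 : ∀ 𝔭 : Ideal (𝓞 K), Prime 𝔭 → 𝔭 ∣ 𝔞 → (absNorm 𝔭).Prime)
    (hP2 : ∀ 𝔭₁ 𝔭₂ : Ideal (𝓞 K), Prime 𝔭₁ → Prime 𝔭₂ → 𝔭₁ ∣ 𝔞 → 𝔭₂ ∣ 𝔞 →
      absNorm 𝔭₁ = absNorm 𝔭₂ → 𝔭₁ = 𝔭₂)
    (hcop : IsCoprime (absNorm 𝔞 : ℤ) (discr K)) {m : ℤ} (hm : (m : 𝓞 K) ∈ 𝔞) :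
    (absNorm 𝔞 : ℤ) ∣ m := by
  classical
  set F := normalizedFactors 𝔞
  have hprod : ∏ 𝔭 ∈ F.toFinset, 𝔭 ^ F.count 𝔭 = 𝔞 := by
    rw [← Finset.prod_multiset_count, Ideal.prod_normalizedFactors_eq_self h𝔞]
  have hF : ∀ 𝔭 ∈ F.toFinset, Prime 𝔭 ∧ 𝔭 ∣ 𝔞 := fun 𝔭 h𝔭 ↦
    ⟨prime_of_normalized_factor 𝔭 (Multiset.mem_toFinset.mp h𝔭),
      dvd_of_mem_normalizedFactors (Multiset.mem_toFinset.mp h𝔭)⟩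
  have hnorm : (absNorm 𝔞 : ℤ) = ∏ 𝔭 ∈ F.toFinset, (absNorm 𝔭 : ℤ) ^ F.count 𝔭 := by
    rw [← hprod, map_prod]
    push_cast [map_pow]
    rfl
  rw [hnorm]
  refine Finset.prod_dvd_of_coprime (fun 𝔭₁ h₁ 𝔭₂ h₂ hne ↦ ?_) fun 𝔭 h𝔭 ↦ ?_
  · obtain ⟨hp₁, hd₁⟩ := hF 𝔭₁ h₁
    obtain ⟨hp₂, hd₂⟩ := hF 𝔭₂ h₂
    refine (Nat.isCoprime_iff_coprime.mpr ?_).pow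
    exact (Nat.coprime_primes (hP1 𝔭₁ hp₁ hd₁) (hP1 𝔭₂ hp₂ hd₂)).mpr
      fun h ↦ hne (hP2 𝔭₁ 𝔭₂ hp₁ hp₂ hd₁ hd₂ h)
  · obtain ⟨hp, hd⟩ := hF 𝔭 h𝔭
    have hN := hP1 𝔭 hp hd
    have hdisc : ¬ (absNorm 𝔭 : ℤ) ∣ discr K := fun h ↦
      (Nat.prime_iff_prime_int.mp hN).not_isUnit <|
        hcop.isUnit_of_dvd' (Int.natCast_dvd_natCast.mpr (map_dvd absNorm hd)) h
    exact (pow_dvd_span_intCast_iff hp hN hdisc _ m).mp <|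
      (hprod ▸ Finset.dvd_prod_of_mem _ h𝔭 : 𝔭 ^ F.count 𝔭 ∣ 𝔞).trans (dvd_span_singleton.mpr hm)

theorem NumberField.charP_quotient_absNorm {K : Type*} [Field K] [NumberField K]
    {𝔞 : Ideal (𝓞 K)} (h𝔞 : 𝔞 ≠ 0)
    (hP1 : ∀ 𝔭 : Ideal (𝓞 K), Prime 𝔭 → 𝔭 ∣ 𝔞 → (absNorm 𝔭).Prime)
    (hP2 : ∀ 𝔭₁ 𝔭₂ : Ideal (𝓞 K), Prime 𝔭₁ → Prime 𝔭₂ → 𝔭₁ ∣ 𝔞 → 𝔭₂ ∣ 𝔞 →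
      absNorm 𝔭₁ = absNorm 𝔭₂ → 𝔭₁ = 𝔭₂)
    (hcop : IsCoprime (absNorm 𝔞 : ℤ) (discr K)) :
    CharP (𝓞 K ⧸ 𝔞) (absNorm 𝔞) := by
  refine ⟨fun m ↦ ?_⟩
  rw [← map_natCast (Ideal.Quotient.mk 𝔞), Ideal.Quotient.eq_zero_iff_mem]
  refine ⟨fun hm ↦ ?_, fun ⟨c, hc⟩ ↦ hc ▸ by simpa using mul_mem_right _ _ (absNorm_mem 𝔞)⟩
  exact Int.natCast_dvd_natCast.mp <|
    absNorm_dvd_of_intCast_mem h𝔞 hP1 hP2 hcop (m := m) (by simpa using hm)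

theorem stmt_8_general {K : Type*} [Field K] [NumberField K]
    (θ : 𝓞 K) (b : ℤ)
    (𝔞 : Ideal (𝓞 K)) (h𝔞 : 𝔞 ≠ 0)
    (hP1 : ∀ 𝔭 : Ideal (𝓞 K), Prime 𝔭 → 𝔭 ∣ 𝔞 → (Ideal.absNorm 𝔭).Prime)
    (hP2 : ∀ 𝔭₁ 𝔭₂ : Ideal (𝓞 K), Prime 𝔭₁ → Prime 𝔭₂ → 𝔭₁ ∣ 𝔞 → 𝔭₂ ∣ 𝔞 →
      Ideal.absNorm 𝔭₁ = Ideal.absNorm 𝔭₂ → 𝔭₁ = 𝔭₂)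
    (hcop : IsCoprime (Ideal.absNorm 𝔞 : ℤ) (NumberField.discr K)) :
    ∃ k : ℤ, ∀ s t : ℤ,
      𝔞 ∣ Ideal.span {(b : 𝓞 K) * (s : 𝓞 K) - θ * (t : 𝓞 K)} ↔
        (Ideal.absNorm 𝔞 : ℤ) ∣ b * s - k * t := by
  have : Finite (𝓞 K ⧸ 𝔞) := finiteQuotientOfFreeOfNeBot 𝔞 h𝔞
  have := charP_quotient_absNorm h𝔞 hP1 hP2 hcop
  obtain ⟨k, hk⟩ := Int.cast_surjective_of_charP
    (by rw [absNorm_apply, Submodule.cardQuot_apply]) (Ideal.Quotient.mk 𝔞 θ)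
  refine ⟨k, fun s t ↦ ?_⟩
  rw [dvd_span_singleton, ← Ideal.Quotient.eq_zero_iff_mem,
    ← CharP.intCast_eq_zero_iff (𝓞 K ⧸ 𝔞) (absNorm 𝔞)]
  simp [hk]

/-- Lemma 2.4: for `𝔞 ∈ 𝒫_K` with `gcd(N𝔞, D_K) = 1` there is
`k ∈ ℤ` such that `𝔞 ∣ (bs - θt)` iff `bs ≡ kt (mod N𝔞)` for all `(s,t) ∈ ℤ²`. -/
theorem stmt_8 {K : Type*} [Field K] [NumberField K]
    (θ : 𝓞 K) (hgen : Algebra.adjoin ℚ {(θ : K)} = ⊤) (b : ℤ)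
    (𝔞 : Ideal (𝓞 K)) (h𝔞 : 𝔞 ≠ 0)
    (hP1 : ∀ 𝔭 : Ideal (𝓞 K), Prime 𝔭 → 𝔭 ∣ 𝔞 → (Ideal.absNorm 𝔭).Prime)
    (hP2 : ∀ 𝔭₁ 𝔭₂ : Ideal (𝓞 K), Prime 𝔭₁ → Prime 𝔭₂ → 𝔭₁ ∣ 𝔞 → 𝔭₂ ∣ 𝔞 →
      Ideal.absNorm 𝔭₁ = Ideal.absNorm 𝔭₂ → 𝔭₁ = 𝔭₂)
    (hcop : IsCoprime (Ideal.absNorm 𝔞 : ℤ) (NumberField.discr K)) :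
    ∃ k : ℤ, ∀ s t : ℤ,
      𝔞 ∣ Ideal.span {(b : 𝓞 K) * (s : 𝓞 K) - θ * (t : 𝓞 K)} ↔
        (Ideal.absNorm 𝔞 : ℤ) ∣ b * s - k * t :=
  stmt_8_general θ b 𝔞 h𝔞 hP1 hP2 hcop
end
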